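/- For every element w of the Weyl group W(E₇), the inner product ⟨û₂, w(û₇)⟩ lies in the set {1/√3, 0, −1/√3}. (Equivalently: the distance between a vertex of type 2 and a vertex of type 7 of the Coxeter complex of type E₇ is one of arccos(1/√3), π/2, arccos(−1/√3).) -/

import Mathlib

noncomputable section

open scoped RealInnerProductSpace

/-- Euclidean space `ℝ⁸`. -/
abbrev E8Space := EuclideanSpace ℝ (Fin 8)

/-- The fundamental root vectors of the root system of type `E₇` inside `ℝ⁸`:
`r₁ = ½(1,1,1,−1,−1,−1,−1,−1)`, `rᵢ = eᵢ − eᵢ₋₁` for `2 ≤ i ≤ 6`, and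
`r₇ = ½(1,1,1,1,1,−1,1,1)` (here indexed by `Fin 7`, with `j = 0` corresponding
to `r₁` and `j = 6` to `r₇`). -/
def E7root : Fin 7 → E8Space := fun j =>
  if j = 0 then WithLp.toLp 2 (fun i => if (i : ℕ) < 3 then (1 : ℝ) / 2 else -(1 / 2))
  else if j = 6 then WithLp.toLp 2 (fun i => if (i : ℕ) = 5 then -(1 : ℝ) / 2 else 1 / 2)
  else WithLp.toLp 2 (fun i => if (i : ℕ) = (j : ℕ) then (1 : ℝ)
        else if (i : ℕ) + 1 = (j : ℕ) then -1 else 0)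

/-- The Weyl group `W(E₇)`: the subgroup of linear isometries of `ℝ⁸` generated by the
reflections `s_r(x) = x − 2(⟨x,r⟩/⟨r,r⟩)r` in the fundamental root vectors of type `E₇`.
These generators preserve the subspace `V = {x : x₇ = x₈}` realizing the Coxeter
complex of type `E₇`. -/
def WeylE7 : Subgroup (E8Space ≃ₗᵢ[ℝ] E8Space) :=
  Subgroup.closure
    { f | ∃ j : Fin 7, ∀ x : E8Space,
        f x = x - ((2 * ⟪x, E7root j⟫ / ⟪E7root j, E7root j⟫) • E7root j) }

/-- `û₂ = (−1,1,1,1,1,1,−1,−1)/(2√2)`, a unit vector representing a vertex of type 2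
of the Coxeter complex of type `E₇`. -/
def u2hatE7 : E8Space := WithLp.toLp 2 (fun i =>
  (if (i : ℕ) = 0 ∨ 6 ≤ (i : ℕ) then -1 else 1) / (2 * Real.sqrt 2))

/-- `û₇ = (1,1,1,1,1,1,0,0)/√6`, a unit vector representing a vertex of type 7
of the Coxeter complex of type `E₇`. -/
def u7hatE7 : E8Space := WithLp.toLp 2 (fun i => (if (i : ℕ) < 6 then 1 else 0) / Real.sqrt 6)

/-!
The vectors `û₂` and `û₇` lie on the rays of the fundamental weights `ω₂` and `ω₇`:
`⟪û₂, rⱼ⟫ ∈ (1/√2)ℤ` and `⟪û₇, rⱼ⟫ ∈ (2/√6)ℤ` for every simple root `rⱼ`. Since the Cartan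
matrix is integral, the set of `x` with all `⟪x, rⱼ⟫ ∈ (2/√6)ℤ` is stable under the simple
reflections `sᵢ x = x - ⟪x, rᵢ⟫ rᵢ`, and on it `sᵢ` changes `⟪û₂, x⟫` by
`⟪x, rᵢ⟫ ⟪û₂, rᵢ⟫ ∈ (1/√3)ℤ`. As `⟪û₂, û₇⟫ = 1/√3`, every `⟪û₂, w û₇⟫` lies in `(1/√3)ℤ`,
and by Cauchy–Schwarz it has absolute value at most `1 < 2/√3`.
-/

open AddSubgroup (zmultiples)

theorem mul_mem_zmultiples_mul {R : Type*} [CommRing R] {a b x y : R} (hx : x ∈ zmultiples a)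
    (hy : y ∈ zmultiples b) : x * y ∈ zmultiples (a * b) := by
  obtain ⟨k, rfl⟩ := AddSubgroup.mem_zmultiples_iff.mp hx
  obtain ⟨l, rfl⟩ := AddSubgroup.mem_zmultiples_iff.mp hy
  exact AddSubgroup.mem_zmultiples_iff.mpr ⟨k * l, by simp only [zsmul_eq_mul, Int.cast_mul]; ring⟩

theorem ite_mem_zmultiples {G : Type*} [AddGroup G] {p : Prop} [Decidable p] (c : G) :
    (if p then c else 0) ∈ zmultiples c := by
  split_ifs
  exacts [AddSubgroup.mem_zmultiples c, zero_mem _]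

theorem eq_or_eq_zero_or_eq_neg_of_mem_zmultiples {R : Type*} [Field R] [LinearOrder R]
    [IsStrictOrderedRing R] {c t : R} (ht : t ∈ zmultiples c) (hlt : |t| < 2 * c) :
    t = c ∨ t = 0 ∨ t = -c := by
  obtain ⟨k, rfl⟩ := AddSubgroup.mem_zmultiples_iff.mp ht
  have hc : 0 < c := by linarith [abs_nonneg (k • c)]
  rw [zsmul_eq_mul, abs_mul, abs_of_pos hc, mul_lt_mul_iff_left₀ hc] at hlt
  have hk : |k| < 2 := by exact_mod_cast hlt
  obtain ⟨hk₁, hk₂⟩ := abs_lt.mp hk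
  interval_cases k <;> simp

section RootReflection

variable {ι E : Type*} [NormedAddCommGroup E] [InnerProductSpace ℝ E]

def rootReflection (r x : E) : E := x - ⟪x, r⟫ • r

theorem inner_rootReflection_self {r : E} (hr : ⟪r, r⟫ = 2) (x : E) :
    ⟪rootReflection r x, r⟫ = -⟪x, r⟫ := by
  rw [rootReflection, inner_sub_left, real_inner_smul_left, hr]
  ring

theorem rootReflection_involutive {r : E} (hr : ⟪r, r⟫ = 2) :
    Function.Involutive (rootReflection r) := by
  intro x
  rw [rootReflection, inner_rootReflection_self hr, rootReflection, neg_smul, sub_neg_eq_add,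
    sub_add_cancel]

theorem sub_smul_eq_rootReflection {r : E} (hr : ⟪r, r⟫ = 2) (x : E) :
    x - (2 * ⟪x, r⟫ / ⟪r, r⟫) • r = rootReflection r x := by
  rw [rootReflection, hr, mul_div_cancel_left₀ _ two_ne_zero]

def pairingLattice (r : ι → E) (u : E) (a b : ℝ) : Set E :=
  {x | (∀ j, ⟪x, r j⟫ ∈ zmultiples a) ∧ ⟪u, x⟫ ∈ zmultiples (a * b)}

variable {r : ι → E} {u : E} {a b : ℝ}

theorem rootReflection_mem_pairingLattice (hr : ∀ i j, ⟪r i, r j⟫ ∈ zmultiples (1 : ℝ))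
    (hu : ∀ j, ⟪u, r j⟫ ∈ zmultiples b) (i : ι) {x : E} (hx : x ∈ pairingLattice r u a b) :
    rootReflection (r i) x ∈ pairingLattice r u a b := by
  simp only [pairingLattice, rootReflection, Set.mem_ofPred_eq, inner_sub_left, inner_sub_right,
    real_inner_smul_left, real_inner_smul_right]
  refine ⟨fun j => sub_mem (hx.1 j) ?_, sub_mem hx.2 (mul_mem_zmultiples_mul (hx.1 i) (hu i))⟩
  simpa using mul_mem_zmultiples_mul (hx.1 i) (hr i j)

theorem rootReflection_mem_pairingLattice_iff (hr : ∀ i j, ⟪r i, r j⟫ ∈ zmultiples (1 : ℝ))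
    (hr₂ : ∀ i, ⟪r i, r i⟫ = 2) (hu : ∀ j, ⟪u, r j⟫ ∈ zmultiples b) (i : ι) (x : E) :
    rootReflection (r i) x ∈ pairingLattice r u a b ↔ x ∈ pairingLattice r u a b := by
  refine ⟨fun hx => ?_, rootReflection_mem_pairingLattice hr hu i⟩
  rw [← rootReflection_involutive (hr₂ i) x]
  exact rootReflection_mem_pairingLattice hr hu i hx

theorem apply_mem_iff_of_mem_closure {S : Set E} {T : Set (E ≃ₗᵢ[ℝ] E)}
    (hT : ∀ f ∈ T, ∀ x, f x ∈ S ↔ x ∈ S) {w : E ≃ₗᵢ[ℝ] E} (hw : w ∈ Subgroup.closure T)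
    (x : E) : w x ∈ S ↔ x ∈ S := by
  induction hw using Subgroup.closure_induction generalizing x with
  | mem f hf => exact hT f hf x
  | one => rfl
  | mul f g _ _ hf hg => exact (hf (g x)).trans (hg x)
  | inv f _ hf => rw [← hf, LinearIsometryEquiv.inv_def, LinearIsometryEquiv.apply_symm_apply]

end RootReflection

/-- The `rⱼ` form a simple system of type `E₇`, numbered as in Bourbaki except that the first
two nodes are swapped. -/
theorem inner_E7root_E7root (i j : Fin 7) :
    ⟪E7root i, E7root j⟫ = CartanMatrix.E₇ (Equiv.swap 0 1 i) (Equiv.swap 0 1 j) := by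
  simp only [PiLp.inner_apply, Fin.sum_univ_eight]
  fin_cases i <;> fin_cases j <;>
    simp [E7root, CartanMatrix.E₇, Equiv.swap_apply_def] <;> norm_num

theorem WeylE7.apply_mem_pairingLattice_iff {u : E8Space} {a b : ℝ}
    (hu : ∀ j, ⟪u, E7root j⟫ ∈ zmultiples b) {w : E8Space ≃ₗᵢ[ℝ] E8Space} (hw : w ∈ WeylE7)
    (x : E8Space) : w x ∈ pairingLattice E7root u a b ↔ x ∈ pairingLattice E7root u a b := by
  have hr : ∀ i j, ⟪E7root i, E7root j⟫ ∈ zmultiples (1 : ℝ) := fun i j => by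
    rw [inner_E7root_E7root]
    exact AddSubgroup.intCast_mem_zmultiples_one _
  have hr₂ : ∀ i, ⟪E7root i, E7root i⟫ = 2 := fun i => by
    rw [inner_E7root_E7root]
    fin_cases i <;> rfl
  refine apply_mem_iff_of_mem_closure (fun f hf y => ?_) hw x
  obtain ⟨j, hf⟩ := hf
  rw [hf, sub_smul_eq_rootReflection (hr₂ j)]
  exact rootReflection_mem_pairingLattice_iff hr hr₂ hu j y

theorem inner_u2hatE7_E7root (j : Fin 7) :
    ⟪u2hatE7, E7root j⟫ = if j = 1 then (√2)⁻¹ else 0 := by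
  simp only [PiLp.inner_apply, Fin.sum_univ_eight]
  fin_cases j <;> simp [u2hatE7, E7root] <;> ring_nf

theorem inner_u7hatE7_E7root (j : Fin 7) :
    ⟪u7hatE7, E7root j⟫ = if j = 6 then 2 / √6 else 0 := by
  simp only [PiLp.inner_apply, Fin.sum_univ_eight]
  fin_cases j <;> simp [u7hatE7, E7root]
  ring_nf

theorem inner_u2hatE7_u7hatE7 : ⟪u2hatE7, u7hatE7⟫ = 2 / √6 * (√2)⁻¹ := by
  simp only [PiLp.inner_apply, Fin.sum_univ_eight]
  simp [u2hatE7, u7hatE7]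
  ring

theorem norm_u2hatE7 : ‖u2hatE7‖ = 1 := by
  rw [EuclideanSpace.norm_eq, Real.sqrt_eq_one, Fin.sum_univ_eight]
  simp [u2hatE7, mul_pow]
  norm_num

theorem norm_u7hatE7 : ‖u7hatE7‖ = 1 := by
  rw [EuclideanSpace.norm_eq, Real.sqrt_eq_one, Fin.sum_univ_eight]
  simp [u7hatE7]
  norm_num

theorem two_div_sqrt_six_mul_inv_sqrt_two : 2 / √6 * (√2)⁻¹ = 1 / √3 := by
  rw [show (6 : ℝ) = 2 * 3 by norm_num, Real.sqrt_mul zero_le_two]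
  field_simp
  rw [Real.sq_sqrt zero_le_two]

theorem inner_u2hatE7_u7hatE7_orbit (w : E8Space ≃ₗᵢ[ℝ] E8Space) (hw : w ∈ WeylE7) :
    ⟪u2hatE7, w u7hatE7⟫ ∈
      ({1 / Real.sqrt 3, 0, -(1 / Real.sqrt 3)} : Set ℝ) := by
  have hu2 (j : Fin 7) : ⟪u2hatE7, E7root j⟫ ∈ zmultiples (√2)⁻¹ := by
    rw [inner_u2hatE7_E7root]
    exact ite_mem_zmultiples _
  have hu7 : u7hatE7 ∈ pairingLattice E7root u2hatE7 (2 / √6) (√2)⁻¹ := by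
    refine ⟨fun j => ?_, ?_⟩
    · rw [inner_u7hatE7_E7root]
      exact ite_mem_zmultiples _
    · rw [inner_u2hatE7_u7hatE7]
      exact AddSubgroup.mem_zmultiples _
  have hmem : ⟪u2hatE7, w u7hatE7⟫ ∈ zmultiples (1 / √3) := by
    rw [← two_div_sqrt_six_mul_inv_sqrt_two]
    exact ((WeylE7.apply_mem_pairingLattice_iff hu2 hw _).mpr hu7).2
  have hbound : |⟪u2hatE7, w u7hatE7⟫| < 2 * (1 / √3) := calc
    |⟪u2hatE7, w u7hatE7⟫| ≤ ‖u2hatE7‖ * ‖w u7hatE7‖ := abs_real_inner_le_norm _ _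
    _ = 1 := by rw [LinearIsometryEquiv.norm_map, norm_u2hatE7, norm_u7hatE7, one_mul]
    _ < 2 * (1 / √3) := by
      rw [mul_one_div, one_lt_div (by positivity), Real.sqrt_lt' two_pos]
      norm_num
  exact eq_or_eq_zero_or_eq_neg_of_mem_zmultiples hmem hbound
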